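/- The tripartite Hardy correlation point P_H ∈ R^26, given in correlator coordinates by all single-body and two-body correlators equal to 0, <A0B0C0>=0, <A0B0C1>=-1, <A0B1C0>=-1, <A0B1C1>=0, <A1B0C0>=-1, <A1B0C1>=0, <A1B1C0>=0, <A1B1C1>=1, achieves value 2 on the Bell functional B(P) = (1/2)(-<A0B1C0> - <A1B0C0> - <A0B0C1> + <A1B1C1>), while every local deterministic behavior achieves B-value at most 1. -/
import Mathlib


/-- The Bell functional `B = (1/2)(-⟨A0B1C0⟩ - ⟨A1B0C0⟩ - ⟨A0B0C1⟩ + ⟨A1B1C1⟩)`,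
as a function of the four relevant three-body correlators. -/
noncomputable def bellFunc (t1 t2 t3 t4 : ℝ) : ℝ := (1 / 2) * (-t1 - t2 - t3 + t4)

/-- The Hardy correlation point `P_H` (with `⟨A0B1C0⟩ = ⟨A1B0C0⟩ = ⟨A0B0C1⟩ = -1`,
`⟨A1B1C1⟩ = 1`) achieves value `2` on the Bell functional, while every local
deterministic behavior achieves value at most `1`. -/
theorem hardy_point_bell_value :
    bellFunc (-1) (-1) (-1) 1 = 2 ∧
    ∀ a0 a1 b0 b1 c0 c1 : ℝ,
      (a0 = 1 ∨ a0 = -1) → (a1 = 1 ∨ a1 = -1) →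
      (b0 = 1 ∨ b0 = -1) → (b1 = 1 ∨ b1 = -1) →
      (c0 = 1 ∨ c0 = -1) → (c1 = 1 ∨ c1 = -1) →
      bellFunc (a0 * b1 * c0) (a1 * b0 * c0) (a0 * b0 * c1) (a1 * b1 * c1) ≤ 1 := by
  refine ⟨by norm_num [bellFunc], ?_⟩
  intro a0 a1 b0 b1 c0 c1 ha0 ha1 hb0 hb1 hc0 hc1
  rcases ha0 with h|h <;> subst h <;> rcases ha1 with h|h <;> subst h <;>
    rcases hb0 with h|h <;> subst h <;> rcases hb1 with h|h <;> subst h <;>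
    rcases hc0 with h|h <;> subst h <;> rcases hc1 with h|h <;> subst h <;>
    norm_num [bellFunc]
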